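/- arXiv:1105.4514 — 4 statements merged into one kernel-verified Lean document; each statement's English description precedes it below -/
import Mathlib

section
/- Let m ≥ 2 and let A : ℕ → Fin m be purely periodic with least period k ≥ 2. If an m-ary n-stage machine generates A (outputting the 0-th stage each clock cycle, one digit per cycle), then n ≥ ⌈log_m N_max⌉ + 1, where N_max = max_{i ∈ Fin m} N_i and N_i is the number of occurrences of digit i in one period of A. -/
/-!
Two equal states at times `t < t'` make the output eventually periodic with period `t' - t`,
and pure periodicity spreads this back to the whole sequence; so minimality of the period `k`
forces the states at times `0, …, k - 1` to be pairwise distinct. The `N_i` of them that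
output digit `i` all share the 0-th stage, so they are separated by the other `n - 1` stages,
which take only `m ^ (n - 1)` values. Hence `N_max ≤ m ^ (n - 1)`, i.e. `⌈log_m N_max⌉ ≤ n - 1`.
-/

theorem Function.Periodic.of_forall_ge_add_eq {β : Type*} {A : ℕ → β} {k : ℕ}
    (hA : Function.Periodic A k) (hk : 0 < k) {t d : ℕ}
    (h : ∀ s ≥ t, A (s + d) = A s) : Function.Periodic A d := by
  intro s
  have hle : t ≤ s + t * k := le_add_left (Nat.le_mul_of_pos_right t hk)
  calc A (s + d) = A (s + d + t * k) := (hA.nat_mul t _).symm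
    _ = A (s + t * k + d) := by rw [add_right_comm]
    _ = A (s + t * k) := h _ hle
    _ = A s := hA.nat_mul t s

section Orbit

variable {α β : Type*} {F : α → α} {x : α} {g : α → β} {A : ℕ → β}

theorem add_eq_of_iterate_eq (hout : ∀ t, g (F^[t] x) = A t) {t d : ℕ}
    (h : F^[t] x = F^[t + d] x) : ∀ s ≥ t, A (s + d) = A s := by
  intro s hs
  obtain ⟨r, rfl⟩ := Nat.exists_eq_add_of_le' hs
  rw [← hout, ← hout, add_assoc, Function.iterate_add_apply F r (t + d), ← h,
    ← Function.iterate_add_apply]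

theorem injOn_iterate_Iio (hout : ∀ t, g (F^[t] x) = A t) {k : ℕ}
    (hper : Function.Periodic A k)
    (hleast : ∀ k', 0 < k' → Function.Periodic A k' → k ≤ k') :
    Set.InjOn (fun t => F^[t] x) (Set.Iio k) := by
  have distinct : ∀ t d, 0 < d → t + d < k → F^[t] x ≠ F^[t + d] x := fun t d hd htd heq =>
    absurd (hleast d hd (hper.of_forall_ge_add_eq (by omega) (add_eq_of_iterate_eq hout heq)))
      (by omega)
  intro t ht t' ht' heq
  simp only [Set.mem_Iio] at ht ht'
  by_contra hne
  rcases Nat.lt_or_gt_of_ne hne with hlt | hlt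
  · exact distinct t (t' - t) (by omega) (by omega) (by rwa [Nat.add_sub_cancel' hlt.le])
  · exact distinct t' (t - t') (by omega) (by omega)
      (by rw [Nat.add_sub_cancel' hlt.le]; exact heq.symm)

end Orbit

theorem Finset.card_le_pow_of_injOn_of_apply_zero_eq {ι β : Type*} [Fintype β] {n : ℕ}
    {s : Finset ι} {φ : ι → Fin (n + 1) → β} {b : β} (hφ : Set.InjOn φ s)
    (h0 : ∀ j ∈ s, φ j 0 = b) : s.card ≤ Fintype.card β ^ n := by
  have hle : s.card ≤ (Finset.univ : Finset (Fin n → β)).card := by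
    refine Finset.card_le_card_of_injOn (fun j => Fin.tail (φ j)) (fun _ _ => Finset.mem_coe.2
      (Finset.mem_univ _)) fun j hj j' hj' htail => hφ hj hj' ?_
    rw [← Fin.cons_self_tail (φ j), ← Fin.cons_self_tail (φ j'), h0 j hj, h0 j' hj']
    exact congrArg _ htail
  simpa using hle

theorem stmt_4_general (m n k : ℕ) (hn : 0 < n) (A : ℕ → Fin m)
    (hper : ∀ t, A (t + k) = A t)
    (hleast : ∀ k', 0 < k' → (∀ t, A (t + k') = A t) → k ≤ k')
    (F : (Fin n → Fin m) → (Fin n → Fin m)) (σ₀ : Fin n → Fin m)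
    (hout : ∀ t, (F^[t] σ₀) ⟨0, hn⟩ = A t) :
    n ≥ Nat.clog m (Finset.univ.sup fun i : Fin m =>
        ((Finset.range k).filter (fun j => A j = i)).card) + 1 := by
  obtain _ | n := n
  · exact absurd hn (lt_irrefl 0)
  have hinj := injOn_iterate_Iio (g := fun σ : Fin (n + 1) → Fin m => σ 0) hout hper hleast
  have hcount (i : Fin m) : ((Finset.range k).filter (fun j => A j = i)).card ≤ m ^ n := by
    refine (Finset.card_le_pow_of_injOn_of_apply_zero_eq (φ := fun t => F^[t] σ₀) (b := i)
      (hinj.mono fun j hj => ?_) fun j hj => ?_).trans_eq (by rw [Fintype.card_fin])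
    · simpa using (Finset.mem_filter.1 hj).1
    · exact (hout j).trans (Finset.mem_filter.1 hj).2
  have := Nat.clog_le_of_le_pow (Finset.sup_le (s := Finset.univ) fun i _ => hcount i)
  omega

theorem stmt_4 (m n k : ℕ) (hm : 2 ≤ m) (hk : 2 ≤ k) (hn : 0 < n) (A : ℕ → Fin m)
    (hper : ∀ t, A (t + k) = A t)
    (hleast : ∀ k', 0 < k' → (∀ t, A (t + k') = A t) → k ≤ k')
    (F : (Fin n → Fin m) → (Fin n → Fin m)) (σ₀ : Fin n → Fin m)
    (hout : ∀ t, (F^[t] σ₀) ⟨0, hn⟩ = A t) :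
    n ≥ Nat.clog m (Finset.univ.sup fun i : Fin m =>
        ((Finset.range k).filter (fun j => A j = i)).card) + 1 :=
  stmt_4_general m n k hn A hper hleast F σ₀ hout
end

section
/- Let m ≥ 2 and let A : ℕ → Fin m be purely periodic with least period k. Then there exists an m-ary n-stage machine with n = ⌈log_m N_max⌉ + 1 stages generating A: concretely, there exists a function F : Fin (m^n) → Fin (m^n) and a state sequence s : ℕ → Fin (m^n) with s(t+1) = F(s t), s(t) mod m = A t for all t, and s periodic with period k. -/
/-!
A state only has to remember the current letter and which occurrence of that letter within the
period we are at. Encoding the `r`-th occurrence of the letter `a` as `a + m * r` makes the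
encoding injective on one period with the letter as its last base-`m` digit; since `r` is below
the number of occurrences of `a`, which is at most `N_max ≤ m ^ clog m N_max`, all codes lie below
`m ^ (clog m N_max + 1)`. An injective-on-a-period periodic sequence is the orbit of some map.
-/

open Finset Function

theorem Function.Periodic.exists_succ_eq_of_injOn {α : Type*} {s : ℕ → α} {k : ℕ}
    (hs : Periodic s k) (hk : 0 < k) (hinj : Set.InjOn s (Set.Iio k)) :
    ∃ F : α → α, ∀ t, s (t + 1) = F (s t) := by
  have hfactors : FactorsThrough (fun t => s (t + 1)) s := by
    intro a b hab
    rw [← hs.map_mod_nat a, ← hs.map_mod_nat b] at hab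
    have hmod : a % k = b % k :=
      hinj (Set.mem_Iio.2 (Nat.mod_lt a hk)) (Set.mem_Iio.2 (Nat.mod_lt b hk)) hab
    show s (a + 1) = s (b + 1)
    rw [← hs.map_mod_nat (a + 1), ← hs.map_mod_nat (b + 1), Nat.add_mod, hmod, ← Nat.add_mod]
  exact ⟨extend s (fun t => s (t + 1)) id, fun t => (hfactors.extend_apply id t).symm⟩

section OccurrenceCode

variable {m : ℕ} (A : ℕ → Fin m)

def occurrenceCode (j : ℕ) : ℕ :=
  A j + m * Nat.count (fun i => A i = A j) j

theorem occurrenceCode_mod (j : ℕ) : occurrenceCode A j % m = A j := by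
  rw [occurrenceCode, Nat.add_mul_mod_self_left, Nat.mod_eq_of_lt (A j).isLt]

theorem occurrenceCode_injective : Injective (occurrenceCode A) := by
  intro a b hab
  have hA : A a = A b := Fin.ext <| by
    rw [← occurrenceCode_mod A a, ← occurrenceCode_mod A b, hab]
  have hcount : Nat.count (fun i => A i = A a) a = Nat.count (fun i => A i = A a) b := by
    have hm : 0 < m := (A a).pos
    unfold occurrenceCode at hab
    rw [hA] at hab ⊢
    exact Nat.eq_of_mul_eq_mul_left hm (by omega)
  exact Nat.count_injective (p := fun i => A i = A a) rfl hA.symm hcount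

theorem count_lt_sup_card {k j : ℕ} (hj : j < k) :
    Nat.count (fun i => A i = A j) j < univ.sup fun a : Fin m => #{i ∈ range k | A i = a} :=
  calc Nat.count (fun i => A i = A j) j
      < Nat.count (fun i => A i = A j) k := Nat.count_strict_mono rfl hj
    _ = #{i ∈ range k | A i = A j} := Nat.count_eq_card_filter_range _ k
    _ ≤ _ := le_sup (f := fun a : Fin m => #{i ∈ range k | A i = a}) (mem_univ (A j))

theorem occurrenceCode_lt (hm : 1 < m) {k j : ℕ} (hj : j < k) :
    occurrenceCode A j <
      m ^ (Nat.clog m (univ.sup fun a : Fin m => #{i ∈ range k | A i = a}) + 1) := by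
  set N := univ.sup fun a : Fin m => #{i ∈ range k | A i = a}
  set r := Nat.count (fun i => A i = A j) j
  have hr : r + 1 ≤ m ^ Nat.clog m N := (count_lt_sup_card A hj).trans_le (Nat.le_pow_clog hm N)
  calc occurrenceCode A j = A j + m * r := rfl
    _ < m * (r + 1) := by have := (A j).isLt; rw [mul_add_one]; omega
    _ ≤ m * m ^ Nat.clog m N := Nat.mul_le_mul_left m hr
    _ = m ^ (Nat.clog m N + 1) := (pow_succ' m _).symm

end OccurrenceCode

theorem stmt_5_general (m k : ℕ) (hm : 2 ≤ m) (hk : 0 < k) (A : ℕ → Fin m)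
    (hper : ∀ t, A (t + k) = A t) :
    ∃ F : Fin (m ^ (Nat.clog m (Finset.univ.sup fun i : Fin m =>
            ((Finset.range k).filter (fun j => A j = i)).card) + 1)) →
          Fin (m ^ (Nat.clog m (Finset.univ.sup fun i : Fin m =>
            ((Finset.range k).filter (fun j => A j = i)).card) + 1)),
      ∃ s : ℕ → Fin (m ^ (Nat.clog m (Finset.univ.sup fun i : Fin m =>
            ((Finset.range k).filter (fun j => A j = i)).card) + 1)),
        (∀ t, s (t + 1) = F (s t)) ∧
        (∀ t, (s t : ℕ) % m = (A t : ℕ)) ∧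
        (∀ t, s (t + k) = s t) := by
  let s : ℕ → Fin _ := fun t => ⟨occurrenceCode A (t % k), occurrenceCode_lt A hm (Nat.mod_lt t hk)⟩
  have hs_periodic : Periodic s k := fun t => by simp only [s, Nat.add_mod_right]
  have hs_injOn : Set.InjOn s (Set.Iio k) := by
    intro a ha b hb hab
    have hcode := occurrenceCode_injective A (congrArg Fin.val hab)
    rwa [Nat.mod_eq_of_lt ha, Nat.mod_eq_of_lt hb] at hcode
  obtain ⟨F, hF⟩ := hs_periodic.exists_succ_eq_of_injOn hk hs_injOn
  refine ⟨F, s, hF, fun t => ?_, hs_periodic⟩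
  rw [occurrenceCode_mod, Periodic.map_mod_nat hper]

theorem stmt_5 (m k : ℕ) (hm : 2 ≤ m) (hk : 0 < k) (A : ℕ → Fin m)
    (hper : ∀ t, A (t + k) = A t)
    (hleast : ∀ k', 0 < k' → (∀ t, A (t + k') = A t) → k ≤ k') :
    ∃ F : Fin (m ^ (Nat.clog m (Finset.univ.sup fun i : Fin m =>
            ((Finset.range k).filter (fun j => A j = i)).card) + 1)) →
          Fin (m ^ (Nat.clog m (Finset.univ.sup fun i : Fin m =>
            ((Finset.range k).filter (fun j => A j = i)).card) + 1)),
      ∃ s : ℕ → Fin (m ^ (Nat.clog m (Finset.univ.sup fun i : Fin m =>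
            ((Finset.range k).filter (fun j => A j = i)).card) + 1)),
        (∀ t, s (t + 1) = F (s t)) ∧
        (∀ t, (s t : ℕ) % m = (A t : ℕ)) ∧
        (∀ t, s (t + k) = s t) :=
  stmt_5_general m k hm hk A hper
end

section
/- Let A : ℕ → Bool (equivalently Fin 2) be purely periodic with least period k, let p ≥ 1, assume p divides k, and let m = 2^p. Define the m-ary encoding A' : ℕ → Fin m of A by A'(j) = Σ_{t=0}^{p−1} A(jp+t)·2^{p−1−t}. Then A' is periodic with period k/p, and any binary n-stage machine generating A with degree of parallelization p (outputting p fresh bits of A per clock cycle from p designated stages) satisfies n ≥ ⌈log_2 N_max⌉ + p, where N_max = max_{i ∈ Fin m} N_i and N_i is the number of occurrences of value i in one period of A'. -/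
/-!
Two cycles `j < j'` of one period `k / p` cannot reach the same state: from then on the machine
would repeat itself, so `A` would be eventually, hence (being periodic) purely, periodic with
period `(j' - j) * p < k`. Cycles `j` with the same symbol `A' j` agree on the `p` output stages,
because the binary encoding is injective, so their states must differ on the other `n - p`
stages; hence every symbol occurs at most `2 ^ (n - p)` times per period.
-/

open Function Finset

theorem injective_sum_ite_two_pow (p : ℕ) :
    Injective fun b : Fin p → Bool =>
      ∑ t : Fin p, if b t then 2 ^ (p - 1 - (t : ℕ)) else 0 := by
  have h : ∀ b : Fin p → Bool, (∑ t : Fin p, if b t then 2 ^ (p - 1 - (t : ℕ)) else 0) =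
      (finFunctionFinEquiv (finTwoEquiv.symm ∘ b ∘ Fin.rev) : ℕ) := by
    intro b
    rw [finFunctionFinEquiv_apply, ← Equiv.sum_comp Fin.revPerm]
    refine sum_congr rfl fun i _ => ?_
    have hi : p - 1 - (p - (i + 1)) = i := by omega
    cases hb : b i.rev <;> simp [hb, finTwoEquiv, Fin.val_rev, hi]
  intro b c hbc
  dsimp only at hbc
  rw [h, h, Fin.val_inj, finFunctionFinEquiv.apply_eq_iff_eq] at hbc
  funext t
  simpa using congrFun hbc t.rev

theorem Function.Periodic.of_eventually {α : Type*} {f : ℕ → α} {k d m : ℕ} (hk : 0 < k)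
    (hf : Periodic f k) (h : ∀ x ≥ m, f (x + d) = f x) : Periodic f d := by
  intro t
  have hmk : Periodic f (m * k) := by simpa using hf.nat_mul m
  calc f (t + d) = f (t + m * k + d) := by rw [add_right_comm, hmk]
    _ = f (t + m * k) := h _ (by nlinarith)
    _ = f t := hmk t

theorem Finset.card_le_pow_of_injOn_of_forall_lt_eq {α β : Type*} [Fintype β] {n p : ℕ}
    (hpn : p ≤ n) {s : Finset α} {f : α → Fin n → β} (hinj : Set.InjOn f s)
    (hagree : ∀ x ∈ s, ∀ y ∈ s, ∀ i : Fin n, (i : ℕ) < p → f x i = f y i) :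
    #s ≤ Fintype.card β ^ (n - p) := by
  let tail : α → Fin (n - p) → β := fun x i => f x ⟨p + i, by omega⟩
  have htail : Set.InjOn tail s := by
    intro x hx y hy hxy
    refine hinj hx hy (funext fun i => ?_)
    by_cases hi : (i : ℕ) < p
    · exact hagree x hx y hy i hi
    · simpa [tail, Nat.add_sub_cancel' (not_lt.1 hi)] using congrFun hxy ⟨i - p, by omega⟩
  simpa using card_le_card_of_injOn tail (t := univ) (fun _ _ => mem_univ _) htail

section Machine

variable {S β : Type*} {F : S → S} {s : S} {p : ℕ} {out : S → Fin p → β} {A : ℕ → β}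

theorem apply_add_mul_eq_of_iterate_eq (hp : 0 < p)
    (hout : ∀ t (r : Fin p), out (F^[t] s) r = A (t * p + r)) {j d : ℕ}
    (h : F^[j + d] s = F^[j] s) (x : ℕ) (hx : j * p ≤ x) : A (x + d * p) = A x := by
  obtain ⟨a, r, hr, rfl⟩ : ∃ a r, r < p ∧ x = (j + a) * p + r :=
    ⟨(x - j * p) / p, (x - j * p) % p, Nat.mod_lt _ hp, by
      have := Nat.div_add_mod' (x - j * p) p; rw [add_mul]; omega⟩
  have hstate : F^[j + a + d] s = F^[j + a] s := by
    rw [show j + a + d = a + (j + d) by ring, iterate_add_apply, h, ← iterate_add_apply,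
      add_comm a]
  calc A ((j + a) * p + r + d * p) = A ((j + a + d) * p + r) := by ring_nf
    _ = out (F^[j + a + d] s) ⟨r, hr⟩ := (hout _ ⟨r, hr⟩).symm
    _ = A ((j + a) * p + r) := by rw [hstate, hout]

theorem injOn_iterate_of_isLeast_period (hp : 0 < p) {k : ℕ} (hk : 0 < k) (hpk : p ∣ k)
    (hper : Periodic A k) (hleast : ∀ k', 0 < k' → Periodic A k' → k ≤ k')
    (hout : ∀ t (r : Fin p), out (F^[t] s) r = A (t * p + r)) :
    Set.InjOn (fun j => F^[j] s) (range (k / p)) := by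
  intro j hj j' hj' h
  by_contra hne
  wlog hlt : j < j' generalizing j j'
  · exact this hj' hj h.symm (Ne.symm hne) (by omega)
  obtain ⟨d, rfl⟩ := Nat.exists_eq_add_of_lt hlt
  have hd : Periodic A ((d + 1) * p) :=
    hper.of_eventually hk (apply_add_mul_eq_of_iterate_eq hp hout h.symm)
  have hlt_k : (d + 1) * p < k := by
    rw [coe_range, Set.mem_Iio, Nat.lt_div_iff_mul_lt' hpk] at hj'
    nlinarith
  exact absurd (hleast _ (by positivity) hd) (not_le.2 hlt_k)

end Machine

theorem stmt_6 (p k n : ℕ) (hp : 1 ≤ p) (hk : 0 < k) (hpk : p ∣ k)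
    (A : ℕ → Bool)
    (hper : ∀ t, A (t + k) = A t)
    (hleast : ∀ k', 0 < k' → (∀ t, A (t + k') = A t) → k ≤ k')
    (A' : ℕ → ℕ)
    (hA' : ∀ j, A' j = ∑ t : Fin p, (if A (j * p + (t : ℕ)) then 2 ^ (p - 1 - (t : ℕ)) else 0))
    (F : (Fin n → Bool) → (Fin n → Bool)) (σ₀ : Fin n → Bool)
    (hpn : p ≤ n)
    (hout : ∀ t, ∀ r : Fin p, (F^[t] σ₀) ⟨(r : ℕ), lt_of_lt_of_le r.isLt hpn⟩ = A (t * p + (r : ℕ))) :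
    (∀ j, A' (j + k / p) = A' j) ∧
    n ≥ Nat.clog 2 ((Finset.range (2 ^ p)).sup fun i =>
        ((Finset.range (k / p)).filter (fun j => A' j = i)).card) + p := by
  refine ⟨fun j => ?_, ?_⟩
  · simp only [hA', add_mul, Nat.div_mul_cancel hpk, add_right_comm _ k, hper]
  have hblock : ∀ j j', A' j = A' j' → ∀ r : Fin p, A (j * p + r) = A (j' * p + r) := by
    intro j j' h
    rw [hA', hA'] at h
    exact congrFun (injective_sum_ite_two_pow p h)
  have horbit : Set.InjOn (fun j => F^[j] σ₀) (range (k / p)) :=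
    injOn_iterate_of_isLeast_period (out := fun σ r => σ (r.castLE hpn)) hp hk hpk hper hleast
      hout
  have hfiber : ∀ i, #{j ∈ range (k / p) | A' j = i} ≤ 2 ^ (n - p) := by
    intro i
    rw [← Fintype.card_bool]
    refine card_le_pow_of_injOn_of_forall_lt_eq hpn (horbit.mono (filter_subset _ _)) ?_
    intro j hj j' hj' r hr
    simp only [mem_filter] at hj hj'
    exact (hout j ⟨r, hr⟩).trans <| (hblock j j' (hj.2.trans hj'.2.symm) ⟨r, hr⟩).trans
      (hout j' ⟨r, hr⟩).symm
  have hclog :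
      Nat.clog 2 ((range (2 ^ p)).sup fun i => #{j ∈ range (k / p) | A' j = i}) ≤ n - p :=
    (Nat.clog_le_iff_le_pow one_lt_two).2 (Finset.sup_le fun i _ => hfiber i)
  omega
end

section
/- Let A : ℕ → Fin 2 be purely periodic with least period k, p ≥ 1 with p ∣ k, and m = 2^p. If there exists an m-ary machine with n' stages generating the m-ary encoding A' of A one m-ary digit per cycle, then there exists a binary machine with p·n' stages generating A with degree of parallelization p. Combined with Theorem 1, A can be generated p bits per cycle by a binary machine with p·(⌈log_m N_max⌉ + 1) stages, where N_max is the maximal occurrence count in one period of A'. -/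
/-!
Encoding each `b ^ p`-ary stage by its `p` base-`b` digits, most significant first, is a bijection
of state spaces; conjugating the `b ^ p`-ary machine by it gives a `b`-ary machine with `p n'`
stages whose first `p` stages hold the digits of the output symbol, namely
`A (t p), …, A (t p + p - 1)`.

For the explicit stage count, a periodic sequence `B` of period `K` is produced by the machine
whose state at time `t` is `B t` followed by the base-`m` digits of the number of earlier
occurrences of `B t` in the current period. This pair determines `t mod K`, so the next state is
a function of the current one, and the rank is below the maximal occurrence count
`N ≤ m ^ ⌈log_m N⌉`.
-/

open Finset Function

-- Stage `s * p + r` of the image holds the digit of weight `b ^ (p - 1 - r)` of stage `s`.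
def digitEncoding (b p n : ℕ) : (Fin n → Fin (b ^ p)) ≃ (Fin (p * n) → Fin b) :=
  ((Equiv.arrowCongr (Equiv.refl (Fin n))
      (finFunctionFinEquiv.symm.trans (Equiv.arrowCongr Fin.revPerm (Equiv.refl (Fin b))))).trans
    (Equiv.curry (Fin n) (Fin p) (Fin b)).symm).trans
    (Equiv.arrowCongr (finProdFinEquiv.trans (finCongr (Nat.mul_comm n p))) (Equiv.refl (Fin b)))

theorem digitEncoding_apply_of_lt {b p n : ℕ} (hn : 0 < n) (σ : Fin n → Fin (b ^ p))
    (r : Fin p) (hr : (r : ℕ) < p * n) :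
    digitEncoding b p n σ ⟨r, hr⟩ = finFunctionFinEquiv.symm (σ ⟨0, hn⟩) r.rev := by
  have h0 : (r : ℕ) / p = 0 := Nat.div_eq_of_lt r.isLt
  simp [digitEncoding, Equiv.arrowCongr_apply, Fin.divNat, Fin.modNat, h0, Nat.mod_eq_of_lt r.isLt]

def blockDigit {b : ℕ} (A : ℕ → Fin b) (p t : ℕ) : Fin (b ^ p) :=
  finFunctionFinEquiv fun i => A (t * p + i.rev)

theorem val_blockDigit {b : ℕ} (A : ℕ → Fin b) (p t : ℕ) :
    (blockDigit A p t : ℕ) = ∑ i : Fin p, (A (t * p + i) : ℕ) * b ^ (p - 1 - i) := by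
  rw [blockDigit, finFunctionFinEquiv_apply, ← Equiv.sum_comp Fin.revPerm]
  refine Finset.sum_congr rfl fun i _ => ?_
  have hi := i.isLt
  simp only [Fin.revPerm_apply, Fin.rev_rev, Fin.val_rev]
  congr 2
  omega

theorem finFunctionFinEquiv_symm_blockDigit {b : ℕ} (A : ℕ → Fin b) (p t : ℕ) (r : Fin p) :
    finFunctionFinEquiv.symm (blockDigit A p t) r.rev = A (t * p + r) := by
  simp only [blockDigit, Equiv.symm_apply_apply, Fin.rev_rev]

theorem blockDigit_periodic {b p k : ℕ} {A : ℕ → Fin b} (hA : Periodic A k) (hpk : p ∣ k) :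
    Periodic (blockDigit A p) (k / p) := by
  intro t
  have hshift : ∀ i : Fin p, (t + k / p) * p + i.rev = t * p + i.rev + k := by
    intro i
    rw [add_mul, Nat.div_mul_cancel hpk]
    ring
  simp only [blockDigit, hshift, hA _]

theorem exists_parallel_machine {b p n : ℕ} (hn : 0 < n) (A : ℕ → Fin b)
    (F : (Fin n → Fin (b ^ p)) → (Fin n → Fin (b ^ p))) (σ₀ : Fin n → Fin (b ^ p))
    (hF : ∀ t, (F^[t] σ₀) ⟨0, hn⟩ = blockDigit A p t) :
    ∃ G : (Fin (p * n) → Fin b) → (Fin (p * n) → Fin b), ∃ τ₀ : Fin (p * n) → Fin b,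
      ∀ t (r : Fin p) (hr : (r : ℕ) < p * n), (G^[t] τ₀) ⟨r, hr⟩ = A (t * p + r) := by
  let E := digitEncoding b p n
  refine ⟨E.conj F, E σ₀, fun t r hr => ?_⟩
  rw [← (E.semiconj_conj F).iterate_right t σ₀, digitEncoding_apply_of_lt hn, hF,
    finFunctionFinEquiv_symm_blockDigit]

theorem exists_iterate_eq {α : Type*} (S : ℕ → α)
    (hS : ∀ i j, S i = S j → S (i + 1) = S (j + 1)) :
    ∃ G : α → α, ∀ t, G^[t] (S 0) = S t := by
  classical
  refine ⟨fun x => if hx : ∃ i, S i = x then S (hx.choose + 1) else x, fun t => ?_⟩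
  induction t with
  | zero => rfl
  | succ t ih =>
    have hx : ∃ i, S i = S t := ⟨t, rfl⟩
    rw [iterate_succ_apply', ih, dif_pos hx, hS _ _ hx.choose_spec]

theorem exists_iterate_eq_mod {α : Type*} {K : ℕ} (hK : 0 < K) (f : ℕ → α)
    (hf : Set.InjOn f (Set.Iio K)) :
    ∃ G : α → α, ∀ t, G^[t] (f 0) = f (t % K) := by
  have hstep : ∀ i j, f (i % K) = f (j % K) → f ((i + 1) % K) = f ((j + 1) % K) :=
    fun i j h => congrArg f (Nat.ModEq.add_right 1
      (hf (Nat.mod_lt i hK) (Nat.mod_lt j hK) h : i % K = j % K))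
  simpa using exists_iterate_eq (fun t => f (t % K)) hstep

theorem card_filter_range_lt_of_lt {P : ℕ → Prop} [DecidablePred P] {j k : ℕ} (hjk : j < k)
    (hj : P j) : #{i ∈ range j | P i} < #{i ∈ range k | P i} := by
  refine card_lt_card ((ssubset_iff_of_subset ?_).2 ⟨j, ?_, ?_⟩)
  · exact filter_subset_filter _ (range_subset_range.2 hjk.le)
  · simp [hjk, hj]
  · simp

def occurrenceRank {β : Type*} [DecidableEq β] (B : ℕ → β) (j : ℕ) : ℕ :=
  #{i ∈ range j | B i = B j}

theorem occurrenceRank_lt_card {β : Type*} [DecidableEq β] (B : ℕ → β) {j K : ℕ} (hj : j < K) :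
    occurrenceRank B j < #{i ∈ range K | B i = B j} :=
  card_filter_range_lt_of_lt hj rfl

theorem occurrenceRank_lt_of_lt {β : Type*} [DecidableEq β] (B : ℕ → β) {i j : ℕ} (hij : i < j)
    (h : B i = B j) : occurrenceRank B i < occurrenceRank B j := by
  rw [occurrenceRank, h]
  exact card_filter_range_lt_of_lt hij h

theorem injective_occurrenceRank {β : Type*} [DecidableEq β] (B : ℕ → β) :
    Injective fun j => (B j, occurrenceRank B j) := by
  intro i j h
  obtain ⟨hB, hrank⟩ := Prod.ext_iff.1 h
  rcases lt_trichotomy i j with hij | hij | hij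
  · exact absurd hrank (occurrenceRank_lt_of_lt B hij hB).ne
  · exact hij
  · exact absurd hrank (occurrenceRank_lt_of_lt B hij hB.symm).ne'

theorem exists_machine_of_card_le {m K n : ℕ} (hK : 0 < K) (B : ℕ → Fin m) (hB : Periodic B K)
    (hcount : ∀ j < K, #{i ∈ range K | B i = B j} ≤ m ^ n) :
    ∃ F : (Fin (n + 1) → Fin m) → (Fin (n + 1) → Fin m), ∃ σ₀ : Fin (n + 1) → Fin m,
      ∀ t, (F^[t] σ₀) 0 = B t := by
  have hpow : 0 < m ^ n := pow_pos (Fin.pos (B 0)) n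
  let state : ℕ → Fin (n + 1) → Fin m := fun j =>
    Fin.cons (B j) (finFunctionFinEquiv.symm ⟨occurrenceRank B j % m ^ n, Nat.mod_lt _ hpow⟩)
  have hrank : ∀ j < K, occurrenceRank B j % m ^ n = occurrenceRank B j := fun j hj =>
    Nat.mod_eq_of_lt ((occurrenceRank_lt_card B hj).trans_le (hcount j hj))
  have hinj : Set.InjOn state (Set.Iio K) := by
    intro i hi j hj h
    obtain ⟨hBij, hdigits⟩ := Fin.cons_inj.1 h
    have := Fin.mk.inj_iff.1 (finFunctionFinEquiv.symm.injective hdigits)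
    rw [hrank i hi, hrank j hj] at this
    exact injective_occurrenceRank B (Prod.ext hBij this)
  obtain ⟨F, hF⟩ := exists_iterate_eq_mod hK state hinj
  exact ⟨F, state 0, fun t => by simp [hF, state, hB.map_mod_nat]⟩

theorem stmt_12_general (p k n' : ℕ) (hp : 1 ≤ p) (hn' : 1 ≤ n') (hk : 0 < k) (hpk : p ∣ k)
    (A : ℕ → Fin 2)
    (hper : ∀ t, A (t + k) = A t)
    (A' : ℕ → ℕ)
    (hA' : ∀ j, A' j = ∑ t : Fin p, (A (j * p + (t : ℕ)) : ℕ) * 2 ^ (p - 1 - (t : ℕ)))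
    (F : (Fin n' → Fin (2 ^ p)) → (Fin n' → Fin (2 ^ p))) (σ₀ : Fin n' → Fin (2 ^ p))
    (hout : ∀ t, ((F^[t] σ₀) ⟨0, hn'⟩ : ℕ) = A' t) :
    (∃ G : (Fin (p * n') → Fin 2) → (Fin (p * n') → Fin 2), ∃ τ₀ : Fin (p * n') → Fin 2,
      ∀ t, ∀ r : Fin p,
        (G^[t] τ₀) ⟨(r : ℕ), lt_of_lt_of_le r.isLt (Nat.le_mul_of_pos_right p hn')⟩ =
          A (t * p + (r : ℕ))) ∧
    (∃ G : (Fin (p * (Nat.clog (2 ^ p) ((Finset.range (2 ^ p)).sup fun i =>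
            ((Finset.range (k / p)).filter (fun j => A' j = i)).card) + 1)) → Fin 2) →
          (Fin (p * (Nat.clog (2 ^ p) ((Finset.range (2 ^ p)).sup fun i =>
            ((Finset.range (k / p)).filter (fun j => A' j = i)).card) + 1)) → Fin 2),
      ∃ τ₀, ∀ t, ∀ r : Fin p, ∀ (hr : (r : ℕ) < p * (Nat.clog (2 ^ p) ((Finset.range (2 ^ p)).sup fun i =>
            ((Finset.range (k / p)).filter (fun j => A' j = i)).card) + 1)),
        (G^[t] τ₀) ⟨(r : ℕ), hr⟩ = A (t * p + (r : ℕ))) := by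
  have hA'_eq : ∀ j, A' j = blockDigit A p j := fun j => by rw [hA', val_blockDigit]
  refine ⟨?_, ?_⟩
  · obtain ⟨G, τ₀, hG⟩ :=
      exists_parallel_machine hn' A F σ₀ fun t => Fin.ext ((hout t).trans (hA'_eq t))
    exact ⟨G, τ₀, fun t r => hG t r _⟩
  · set N := (range (2 ^ p)).sup fun i => #{j ∈ range (k / p) | A' j = i}
    have hcount : ∀ j < k / p, #{i ∈ range (k / p) | blockDigit A p i = blockDigit A p j} ≤
        (2 ^ p) ^ Nat.clog (2 ^ p) N := by
      intro j _
      calc #{i ∈ range (k / p) | blockDigit A p i = blockDigit A p j}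
          = #{i ∈ range (k / p) | A' i = A' j} := by simp only [hA'_eq, Fin.val_inj]
        _ ≤ N := le_sup (f := fun i => #{j ∈ range (k / p) | A' j = i})
            (mem_range.2 ((hA'_eq j).trans_lt (blockDigit A p j).isLt))
        _ ≤ _ := Nat.le_pow_clog (Nat.one_lt_two_pow_iff.2 (by omega)) N
    obtain ⟨F₂, σ₂, hF₂⟩ := exists_machine_of_card_le (Nat.div_pos (Nat.le_of_dvd hk hpk) hp)
      (blockDigit A p) (blockDigit_periodic hper hpk) hcount
    exact exists_parallel_machine (Nat.succ_pos _) A F₂ σ₂ hF₂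

theorem stmt_12 (p k n' : ℕ) (hp : 1 ≤ p) (hn' : 1 ≤ n') (hk : 0 < k) (hpk : p ∣ k)
    (A : ℕ → Fin 2)
    (hper : ∀ t, A (t + k) = A t)
    (hleast : ∀ k', 0 < k' → (∀ t, A (t + k') = A t) → k ≤ k')
    (A' : ℕ → ℕ)
    (hA' : ∀ j, A' j = ∑ t : Fin p, (A (j * p + (t : ℕ)) : ℕ) * 2 ^ (p - 1 - (t : ℕ)))
    (F : (Fin n' → Fin (2 ^ p)) → (Fin n' → Fin (2 ^ p))) (σ₀ : Fin n' → Fin (2 ^ p))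
    (hout : ∀ t, ((F^[t] σ₀) ⟨0, hn'⟩ : ℕ) = A' t) :
    (∃ G : (Fin (p * n') → Fin 2) → (Fin (p * n') → Fin 2), ∃ τ₀ : Fin (p * n') → Fin 2,
      ∀ t, ∀ r : Fin p,
        (G^[t] τ₀) ⟨(r : ℕ), lt_of_lt_of_le r.isLt (Nat.le_mul_of_pos_right p hn')⟩ =
          A (t * p + (r : ℕ))) ∧
    (∃ G : (Fin (p * (Nat.clog (2 ^ p) ((Finset.range (2 ^ p)).sup fun i =>
            ((Finset.range (k / p)).filter (fun j => A' j = i)).card) + 1)) → Fin 2) →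
          (Fin (p * (Nat.clog (2 ^ p) ((Finset.range (2 ^ p)).sup fun i =>
            ((Finset.range (k / p)).filter (fun j => A' j = i)).card) + 1)) → Fin 2),
      ∃ τ₀, ∀ t, ∀ r : Fin p, ∀ (hr : (r : ℕ) < p * (Nat.clog (2 ^ p) ((Finset.range (2 ^ p)).sup fun i =>
            ((Finset.range (k / p)).filter (fun j => A' j = i)).card) + 1)),
        (G^[t] τ₀) ⟨(r : ℕ), hr⟩ = A (t * p + (r : ℕ))) :=
  stmt_12_general p k n' hp hn' hk hpk A hper A' hA' F σ₀ hout
end
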